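/- arXiv:2403.04157 — 6 statements merged into one kernel-verified Lean document; each statement's English description precedes it below -/
import Mathlib

section
/- Let G be a finite group with connected intersection graph Δ_G having at least two vertices. Then diam(Δ_G) ≤ 2 if and only if no pair of elements of prime order generates G. -/
/-- Vertices of the intersection graph: nontrivial proper subgroups. -/
def IGVert (G : Type*) [Group G] : Type _ := {H : Subgroup G // H ≠ ⊥ ∧ H ≠ ⊤}

/-- The intersection graph of a group: edges between distinct subgroups
with nontrivial intersection. -/
def intGraph (G : Type*) [Group G] : SimpleGraph (IGVert G) where
  Adj H K := H ≠ K ∧ H.1 ⊓ K.1 ≠ ⊥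
  symm := ⟨fun _ _ ⟨h1, h2⟩ => ⟨h1.symm, by rwa [inf_comm] at h2⟩⟩
  loopless := ⟨fun _ h => h.1 rfl⟩

section aux
variable {G : Type*} [Group G] [Fintype G]

lemma exists_prime_order' {H : Subgroup G} (hH : H ≠ ⊥) :
    ∃ g : G, g ∈ H ∧ (orderOf g).Prime := by
  obtain ⟨⟨x, hxH⟩, hx1⟩ := Subgroup.ne_bot_iff_exists_ne_one.mp hH
  have hx : x ≠ 1 := by simpa [Subtype.ext_iff] using hx1
  have hord : orderOf x ≠ 1 := by simpa [orderOf_eq_one_iff] using hx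
  obtain ⟨p, hp, hdvd⟩ := Nat.exists_prime_and_dvd hord
  refine ⟨x ^ (orderOf x / p), H.pow_mem hxH _, ?_⟩
  rwa [orderOf_pow_orderOf_div (orderOf_pos x).ne' hdvd]

lemma mem_of_inf_zpowers_ne_bot {g : G} (hg : (orderOf g).Prime)
    {K : Subgroup G} (h : K ⊓ Subgroup.zpowers g ≠ ⊥) : g ∈ K := by
  obtain ⟨⟨x, hxK, hxg⟩, hx1⟩ := Subgroup.ne_bot_iff_exists_ne_one.mp h
  have hx : x ≠ 1 := by simpa [Subtype.ext_iff] using hx1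
  have hdvd : orderOf x ∣ orderOf g := orderOf_dvd_of_mem_zpowers hxg
  have hox : orderOf x = orderOf g := by
    rcases (Nat.Prime.eq_one_or_self_of_dvd hg _ hdvd) with h1 | h'
    · exact absurd (orderOf_eq_one_iff.mp h1) hx
    · exact h'
  have hle : Subgroup.zpowers x ≤ Subgroup.zpowers g := Subgroup.zpowers_le.mpr hxg
  have heq : Subgroup.zpowers x = Subgroup.zpowers g := by
    refine Subgroup.eq_of_le_of_card_ge hle ?_
    rw [Nat.card_zpowers, Nat.card_zpowers, hox]
  have : g ∈ Subgroup.zpowers x := heq ▸ Subgroup.mem_zpowers g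
  exact Subgroup.zpowers_le.mpr hxK this

omit [Fintype G] in
lemma closure_pair_le {g h : G} {K : Subgroup G} (hg : g ∈ K) (hh : h ∈ K) :
    Subgroup.closure {g, h} ≤ K := by
  rw [Subgroup.closure_le]
  rintro x (rfl | rfl) <;> assumption

end aux

theorem stmt2 {G : Type*} [Group G] [Fintype G]
    (hconn : (intGraph G).Connected) [Nontrivial (IGVert G)] :
    (intGraph G).diam ≤ 2 ↔
      ¬ ∃ g h : G, (orderOf g).Prime ∧ (orderOf h).Prime ∧
        Subgroup.closure {g, h} = ⊤ := by
  classical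
  have hfin : Finite (IGVert G) :=
    inferInstanceAs (Finite {H : Subgroup G // H ≠ ⊥ ∧ H ≠ ⊤})
  have hnonempty : Nonempty (IGVert G) := hconn.nonempty
  have hne : (intGraph G).ediam ≠ ⊤ := by
    obtain ⟨u, v, huv⟩ := SimpleGraph.exists_edist_eq_ediam_of_finite (G := intGraph G)
    rw [← huv]
    exact SimpleGraph.edist_ne_top_iff_reachable.mpr (hconn u v)
  constructor
  · rintro hd ⟨g, h, hg, hh, hgen⟩
    have hg1 : g ≠ 1 := fun e => by simp [e, Nat.not_prime_one] at hg
    have hh1 : h ≠ 1 := fun e => by simp [e, Nat.not_prime_one] at hh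
    have hzbot : ∀ x : G, x ≠ 1 → Subgroup.zpowers x ≠ ⊥ := fun x hx hb =>
      hx (Subgroup.mem_bot.mp (hb ▸ Subgroup.mem_zpowers x))
    -- zpowers g and zpowers h are proper
    have hproper : ∀ x : G, (orderOf x).Prime → Subgroup.zpowers x ≠ ⊤ := by
      intro x hx htop
      obtain ⟨K⟩ := hnonempty
      have hcard : Nat.card G = orderOf x := by
        rw [← Nat.card_zpowers, htop, Subgroup.card_top]
      have hdvd : Nat.card K.1 ∣ Nat.card G := Subgroup.card_subgroup_dvd_card K.1
      rw [hcard] at hdvd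
      rcases (hx.eq_one_or_self_of_dvd _ hdvd) with h1 | hp
      · exact K.2.1 (Subgroup.card_eq_one.mp h1)
      · exact K.2.2 ((Subgroup.card_eq_iff_eq_top K.1).mp (by rw [hp, hcard]))
    set u : IGVert G := ⟨Subgroup.zpowers g, hzbot g hg1, hproper g hg⟩
    set v : IGVert G := ⟨Subgroup.zpowers h, hzbot h hh1, hproper h hh⟩
    have hu1 : u.1 = Subgroup.zpowers g := rfl
    have hv1 : v.1 = Subgroup.zpowers h := rfl
    have huvne : u ≠ v := by
      intro e
      have : Subgroup.zpowers g = Subgroup.zpowers h := congrArg Subtype.val e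
      have hle : Subgroup.closure {g, h} ≤ Subgroup.zpowers h :=
        closure_pair_le (this ▸ Subgroup.mem_zpowers g) (Subgroup.mem_zpowers h)
      exact hproper h hh (top_le_iff.mp (le_of_eq_of_le hgen.symm hle))
    clear_value u v
    obtain ⟨p, hp⟩ := hconn.exists_walk_length_eq_dist u v
    have hlen : p.length ≤ 2 := by
      rw [hp]; exact le_trans (SimpleGraph.dist_le_diam hne) hd
    -- in any case we derive that some proper subgroup contains g and h, or u = v / adjacency
    cases p with
    | nil => exact huvne rfl
    | cons ha q =>
      cases q with
      | nil =>
        -- Adj u v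
        have hgmem : g ∈ Subgroup.zpowers h := by
          apply mem_of_inf_zpowers_ne_bot hg
          have := ha.2
          rwa [inf_comm, hu1, hv1] at this
        have hle : Subgroup.closure {g, h} ≤ Subgroup.zpowers h :=
          closure_pair_le hgmem (Subgroup.mem_zpowers h)
        exact hproper h hh (top_le_iff.mp (le_of_eq_of_le hgen.symm hle))
      | cons hb r =>
        cases r with
        | nil =>
          rename_i w
          have hgw : g ∈ w.1 := by
            apply mem_of_inf_zpowers_ne_bot hg
            have := ha.2
            rwa [inf_comm, hu1] at this
          have hhw : h ∈ w.1 := by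
            apply mem_of_inf_zpowers_ne_bot hh
            have := hb.2
            rwa [hv1] at this
          exact w.2.2 (top_le_iff.mp (le_of_eq_of_le hgen.symm (closure_pair_le hgw hhw)))
        | cons hc r' => simp [SimpleGraph.Walk.length_cons] at hlen
  · intro hno
    obtain ⟨u, v, huv⟩ := SimpleGraph.exists_dist_eq_diam (G := intGraph G)
    rw [← huv]
    by_cases he : u = v
    · simp [he, SimpleGraph.dist_self]
    by_cases hadj : (intGraph G).Adj u v
    · calc (intGraph G).dist u v ≤ (SimpleGraph.Walk.cons hadj SimpleGraph.Walk.nil).length :=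
            SimpleGraph.dist_le _
        _ ≤ 2 := by simp
    have hbot : u.1 ⊓ v.1 = ⊥ := by
      by_contra hb
      exact hadj ⟨he, hb⟩
    obtain ⟨g, hgu, hg⟩ := exists_prime_order' u.2.1
    obtain ⟨h, hhv, hh⟩ := exists_prime_order' v.2.1
    have hg1 : g ≠ 1 := fun e => by simp [e, Nat.not_prime_one] at hg
    have hh1 : h ≠ 1 := fun e => by simp [e, Nat.not_prime_one] at hh
    set M := Subgroup.closure ({g, h} : Set G) with hM
    have hgM : g ∈ M := Subgroup.subset_closure (by simp)
    have hhM : h ∈ M := Subgroup.subset_closure (by simp)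
    have hMtop : M ≠ ⊤ := fun ht => hno ⟨g, h, hg, hh, ht⟩
    have hMbot : M ≠ ⊥ := fun hb => hg1 (Subgroup.mem_bot.mp (hb ▸ hgM))
    set w : IGVert G := ⟨M, hMbot, hMtop⟩
    have huw : (intGraph G).Adj u w := by
      refine ⟨?_, ?_⟩
      · intro e
        have : u.1 = M := congrArg Subtype.val e
        have : h ∈ u.1 ⊓ v.1 := ⟨this ▸ hhM, hhv⟩
        rw [hbot] at this
        exact hh1 (Subgroup.mem_bot.mp this)
      · intro hb
        have : g ∈ u.1 ⊓ M := ⟨hgu, hgM⟩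
        rw [hb] at this
        exact hg1 (Subgroup.mem_bot.mp this)
    have hwv : (intGraph G).Adj w v := by
      refine ⟨?_, ?_⟩
      · intro e
        have : M = v.1 := congrArg Subtype.val e
        have : g ∈ u.1 ⊓ v.1 := ⟨hgu, this ▸ hgM⟩
        rw [hbot] at this
        exact hg1 (Subgroup.mem_bot.mp this)
      · intro hb
        have : h ∈ M ⊓ v.1 := ⟨hhM, hhv⟩
        rw [hb] at this
        exact hh1 (Subgroup.mem_bot.mp this)
    calc (intGraph G).dist u v
        ≤ (SimpleGraph.Walk.cons huw (SimpleGraph.Walk.cons hwv SimpleGraph.Walk.nil)).length :=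
          SimpleGraph.dist_le _
      _ ≤ 2 := by simp
end

section
/- In the alternating group A₅, any two cyclic subgroups of order 5 are at distance at most 3 in the intersection graph of A₅. -/
lemma altcard : Nat.card (alternatingGroup (Fin 5)) = 60 := by
  have h : 2 * Nat.card (alternatingGroup (Fin 5)) = 120 := by
    rw [Nat.card_eq_fintype_card, two_mul_card_alternatingGroup, Fintype.card_perm]
    simp only [Fintype.card_fin]
    decide
  omega

lemma normalizer_card_ten (P : Subgroup (alternatingGroup (Fin 5)))
    (hP : Nat.card P = 5) : Nat.card (Subgroup.normalizer (P : Set (alternatingGroup (Fin 5)))) = 10 := by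
  have hG : Nat.card (alternatingGroup (Fin 5)) = 60 := altcard
  haveI : Fact (Nat.Prime 5) := ⟨by norm_num⟩
  have hfact : Nat.card P = 5 ^ (Nat.card (alternatingGroup (Fin 5))).factorization 5 := by
    have h5 : Nat.Prime 5 := by norm_num
    have h1 : 1 ≤ (60:ℕ).factorization 5 :=
      (Nat.Prime.pow_dvd_iff_le_factorization h5 (by norm_num)).mp (by norm_num)
    have h2 : ¬ 2 ≤ (60:ℕ).factorization 5 := fun h => by
      have := (Nat.Prime.pow_dvd_iff_le_factorization h5 (by norm_num)).mpr h
      norm_num at this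
    have hf : (60:ℕ).factorization 5 = 1 := by omega
    rw [hG, hf, pow_one, hP]
  let PS : Sylow 5 (alternatingGroup (Fin 5)) := Sylow.ofCard P hfact
  have hPS : (PS : Subgroup (alternatingGroup (Fin 5))) = P := rfl
  have hidx : P.index = 12 := by
    have := Subgroup.card_mul_index P
    rw [hP, hG] at this
    omega
  have hdvd : Nat.card (Sylow 5 (alternatingGroup (Fin 5))) ∣ 12 := by
    have := Sylow.card_dvd_index PS
    rwa [hPS, hidx] at this
  have hmod : Nat.card (Sylow 5 (alternatingGroup (Fin 5))) % 5 = 1 := by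
    have := card_sylow_modEq_one 5 (alternatingGroup (Fin 5))
    simpa [Nat.ModEq] using this
  have hne1 : Nat.card (Sylow 5 (alternatingGroup (Fin 5))) ≠ 1 := by
    intro h1
    have heq := Sylow.card_eq_index_normalizer PS
    rw [h1] at heq
    change 1 = (Subgroup.normalizer (P : Set (alternatingGroup (Fin 5)))).index at heq
    have hnorm : Subgroup.normalizer (P : Set (alternatingGroup (Fin 5))) = ⊤ := Subgroup.index_eq_one.mp heq.symm
    have hn : P.Normal := Subgroup.normalizer_eq_top_iff.mp hnorm
    rcases hn.eq_bot_or_eq_top with hb | ht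
    · rw [hb, Subgroup.card_bot] at hP; exact absurd hP (by norm_num)
    · rw [ht, Subgroup.card_top, hG] at hP; exact absurd hP (by norm_num)
  have hn6 : Nat.card (Sylow 5 (alternatingGroup (Fin 5))) = 6 := by
    have hle : Nat.card (Sylow 5 (alternatingGroup (Fin 5))) ≤ 12 :=
      Nat.le_of_dvd (by norm_num) hdvd
    set n := Nat.card (Sylow 5 (alternatingGroup (Fin 5))) with hn
    clear_value n
    interval_cases n <;> revert hdvd hmod hne1 <;> decide
  have heq := Sylow.card_eq_index_normalizer PS
  rw [hn6] at heq
  change 6 = (Subgroup.normalizer (P : Set (alternatingGroup (Fin 5)))).index at heq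
  have := Subgroup.card_mul_index (Subgroup.normalizer (P : Set (alternatingGroup (Fin 5))))
  rw [← heq, hG] at this
  omega

lemma card_mul_card_le_of_inf_eq_bot {G : Type*} [Group G] [Finite G] (H K : Subgroup G)
    (h : H ⊓ K = ⊥) : Nat.card H * Nat.card K ≤ Nat.card G := by
  have hinj : Function.Injective (fun p : H × K => (p.1 : G) * p.2) := by
    rintro ⟨⟨h1, hh1⟩, ⟨k1, hk1⟩⟩ ⟨⟨h2, hh2⟩, ⟨k2, hk2⟩⟩ heq
    simp only [Prod.mk.injEq, Subtype.mk.injEq] at heq ⊢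
    have h' : h1 * k1 = h2 * k2 := heq
    have key : h2⁻¹ * h1 = k2 * k1⁻¹ := by
      calc h2⁻¹ * h1 = h2⁻¹ * (h1 * k1) * k1⁻¹ := by group
        _ = h2⁻¹ * (h2 * k2) * k1⁻¹ := by rw [h']
        _ = k2 * k1⁻¹ := by group
    have hm : h2⁻¹ * h1 ∈ H ⊓ K := by
      refine ⟨H.mul_mem (H.inv_mem hh2) hh1, ?_⟩
      rw [key]; exact K.mul_mem hk2 (K.inv_mem hk1)
    rw [h, Subgroup.mem_bot] at hm
    have e1 : h1 = h2 := by
      have := mul_eq_one_iff_inv_eq.mp hm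
      simpa using this.symm
    refine ⟨e1, ?_⟩
    rw [e1] at h'
    exact mul_left_cancel h'
  calc Nat.card H * Nat.card K = Nat.card (H × K) := (Nat.card_prod _ _).symm
    _ ≤ Nat.card G := Nat.card_le_card_of_injective _ hinj

theorem stmt7 (A B : IGVert (alternatingGroup (Fin 5)))
    (hA : IsCyclic A.1) (hB : IsCyclic B.1)
    (hcA : Nat.card A.1 = 5) (hcB : Nat.card B.1 = 5) :
    (intGraph (alternatingGroup (Fin 5))).dist A B ≤ 3 := by
  have hG : Nat.card (alternatingGroup (Fin 5)) = 60 := altcard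
  -- the normalizers
  have hNA : Nat.card (Subgroup.normalizer (A.1 : Set (alternatingGroup (Fin 5)))) = 10 := normalizer_card_ten A.1 hcA
  have hNB : Nat.card (Subgroup.normalizer (B.1 : Set (alternatingGroup (Fin 5)))) = 10 := normalizer_card_ten B.1 hcB
  have hnbotA : Subgroup.normalizer (A.1 : Set (alternatingGroup (Fin 5))) ≠ ⊥ := by
    intro h; rw [h, Subgroup.card_bot] at hNA; exact absurd hNA (by norm_num)
  have hntopA : Subgroup.normalizer (A.1 : Set (alternatingGroup (Fin 5))) ≠ ⊤ := by
    intro h; rw [h, Subgroup.card_top, hG] at hNA; exact absurd hNA (by norm_num)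
  have hnbotB : Subgroup.normalizer (B.1 : Set (alternatingGroup (Fin 5))) ≠ ⊥ := by
    intro h; rw [h, Subgroup.card_bot] at hNB; exact absurd hNB (by norm_num)
  have hntopB : Subgroup.normalizer (B.1 : Set (alternatingGroup (Fin 5))) ≠ ⊤ := by
    intro h; rw [h, Subgroup.card_top, hG] at hNB; exact absurd hNB (by norm_num)
  set NA : IGVert (alternatingGroup (Fin 5)) := ⟨Subgroup.normalizer (A.1 : Set (alternatingGroup (Fin 5))), hnbotA, hntopA⟩ with hNAdef
  set NB : IGVert (alternatingGroup (Fin 5)) := ⟨Subgroup.normalizer (B.1 : Set (alternatingGroup (Fin 5))), hnbotB, hntopB⟩ with hNBdef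
  -- A is adjacent to NA
  have hAneNA : A ≠ NA := by
    intro h
    have : Nat.card A.1 = Nat.card (Subgroup.normalizer (A.1 : Set (alternatingGroup (Fin 5)))) := by
      conv_lhs => rw [h]
    rw [hcA, hNA] at this; exact absurd this (by norm_num)
  have hBneNB : B ≠ NB := by
    intro h
    have : Nat.card B.1 = Nat.card (Subgroup.normalizer (B.1 : Set (alternatingGroup (Fin 5)))) := by
      conv_lhs => rw [h]
    rw [hcB, hNB] at this; exact absurd this (by norm_num)
  have hadjANA : (intGraph (alternatingGroup (Fin 5))).Adj A NA := by
    refine ⟨hAneNA, ?_⟩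
    rw [inf_of_le_left Subgroup.le_normalizer]
    exact A.2.1
  have hadjBNB : (intGraph (alternatingGroup (Fin 5))).Adj B NB := by
    refine ⟨hBneNB, ?_⟩
    rw [inf_of_le_left Subgroup.le_normalizer]
    exact B.2.1
  by_cases hNN : NA = NB
  · -- walk A - NA - B of length 2 (or A = B / adjacency)
    by_cases hAB : A = B
    · subst hAB; simp [SimpleGraph.dist_self]
    · have hadjNAB : (intGraph (alternatingGroup (Fin 5))).Adj NA B := by
        refine ⟨?_, ?_⟩
        · intro h
          have hc : Nat.card (Subgroup.normalizer (A.1 : Set (alternatingGroup (Fin 5)))) = Nat.card B.1 :=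
            congrArg (fun v : IGVert (alternatingGroup (Fin 5)) => Nat.card v.1) h
          rw [hNA, hcB] at hc; exact absurd hc (by norm_num)
        · have h1 : Subgroup.normalizer (A.1 : Set (alternatingGroup (Fin 5))) = Subgroup.normalizer (B.1 : Set (alternatingGroup (Fin 5))) :=
            congrArg Subtype.val hNN
          show Subgroup.normalizer (A.1 : Set (alternatingGroup (Fin 5))) ⊓ B.1 ≠ ⊥
          rw [h1, inf_of_le_right Subgroup.le_normalizer]
          exact B.2.1
      refine le_trans (SimpleGraph.dist_le (.cons hadjANA (.cons hadjNAB .nil))) ?_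
      simp
  · -- NA and NB intersect nontrivially since 10 * 10 > 60
    have hinf : Subgroup.normalizer (A.1 : Set (alternatingGroup (Fin 5))) ⊓ Subgroup.normalizer (B.1 : Set (alternatingGroup (Fin 5))) ≠ ⊥ := by
      intro h
      have := card_mul_card_le_of_inf_eq_bot _ _ h
      rw [hNA, hNB, hG] at this
      exact absurd this (by norm_num)
    have hadjNN : (intGraph (alternatingGroup (Fin 5))).Adj NA NB := ⟨hNN, hinf⟩
    refine le_trans
      (SimpleGraph.dist_le (.cons hadjANA (.cons hadjNN (.cons hadjBNB.symm .nil)))) ?_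
    simp
end

section
/- In the alternating group A₇, any two cyclic subgroups of order 7 are at distance at most 3 in the intersection graph of A₇. -/
namespace IGAux

open Equiv Equiv.Perm Subgroup

/-- Build a permutation of `Fin 7` from explicit data. -/
def pmk (v w : Fin 7 → Fin 7) (h1 : ∀ x, w (v x) = x) (h2 : ∀ x, v (w x) = x) :
    Equiv.Perm (Fin 7) := ⟨v, w, h1, h2⟩

def σp : Perm (Fin 7) := pmk ![1,2,3,4,5,6,0] ![6,0,1,2,3,4,5] (by decide) (by decide)
def cp : Perm (Fin 7) := pmk ![0,2,4,6,1,3,5] ![0,4,1,5,2,6,3] (by decide) (by decide)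
def τp : Perm (Fin 7) := pmk ![0,1,4,3,2,6,5] ![0,1,4,3,2,6,5] (by decide) (by decide)
def wp : Perm (Fin 7) := pmk ![0,3,6,2,5,1,4] ![0,5,3,1,6,4,2] (by decide) (by decide)
def tp : Perm (Fin 7) := pmk ![1,2,0,3,4,5,6] ![2,0,1,3,4,5,6] (by decide) (by decide)

/-- The lines of a Fano plane structure on `Fin 7`. -/
def lines : Finset (Finset (Fin 7)) :=
  {{0,1,3},{1,2,4},{2,3,5},{3,4,6},{4,5,0},{5,6,1},{6,0,2}}

/-- A permutation preserves the Fano plane. -/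
def fano (p : Perm (Fin 7)) : Prop := lines.image (fun L => L.image p) = lines

instance : DecidablePred fano := fun p => by unfold fano; infer_instance

lemma fano_mul {p q : Perm (Fin 7)} (hp : fano p) (hq : fano q) : fano (p * q) := by
  unfold fano at *
  rw [show (fun L : Finset (Fin 7) => L.image ⇑(p * q))
      = (fun M : Finset (Fin 7) => M.image ⇑p) ∘ (fun L : Finset (Fin 7) => L.image ⇑q) from
      funext fun L => by rw [Function.comp_apply, Finset.image_image]; rfl,
    ← Finset.image_image, hq, hp]

lemma fano_inv {p : Perm (Fin 7)} (hp : fano p) : fano p⁻¹ := by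
  unfold fano at *
  conv_lhs => rw [← hp]
  rw [Finset.image_image]
  have h : ((fun L : Finset (Fin 7) => L.image ⇑p⁻¹) ∘
      fun L : Finset (Fin 7) => L.image ⇑p) = id := by
    funext L
    simp [Finset.image_image, Function.comp_def]
  rw [h, Finset.image_id]

/-- The Fano-plane stabilizer inside `Perm (Fin 7)` (a copy of `PSL(3,2)`). -/
def Q : Subgroup (Perm (Fin 7)) where
  carrier := setOf fano
  one_mem' := by show fano 1; decide
  mul_mem' := fano_mul
  inv_mem' := fano_inv

/-- The Fano-plane stabilizer viewed inside the alternating group. -/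
def P : Subgroup (alternatingGroup (Fin 7)) := Q.subgroupOf (alternatingGroup (Fin 7))

def σG : alternatingGroup (Fin 7) := ⟨σp, Perm.mem_alternatingGroup.mpr (by decide)⟩
def cG : alternatingGroup (Fin 7) := ⟨cp, Perm.mem_alternatingGroup.mpr (by decide)⟩
def τG : alternatingGroup (Fin 7) := ⟨τp, Perm.mem_alternatingGroup.mpr (by decide)⟩
def tG : alternatingGroup (Fin 7) := ⟨tp, Perm.mem_alternatingGroup.mpr (by decide)⟩

lemma hσP : σG ∈ P := Subgroup.mem_subgroupOf.mpr (show fano σp by decide)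

def σP : ↥P := ⟨σG, hσP⟩
def cP : ↥P := ⟨cG, Subgroup.mem_subgroupOf.mpr (show fano cp by decide)⟩
def τP : ↥P := ⟨τG, Subgroup.mem_subgroupOf.mpr (show fano τp by decide)⟩

/-- 56 distinct elements of the Fano-plane stabilizer. -/
def els : List ↥P := [(1 : ↥P), σP, cP, τP, σP*σP, cP*σP, τP*σP, σP*cP, cP*cP, τP*cP,
  σP*τP, cP*τP, σP*σP*σP, cP*σP*σP, τP*σP*σP, σP*cP*σP, cP*cP*σP, τP*cP*σP, σP*τP*σP,
  cP*τP*σP, cP*σP*cP, τP*σP*cP, σP*cP*cP, σP*τP*cP, σP*σP*τP, cP*σP*τP, τP*σP*τP,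
  σP*cP*τP, σP*σP*σP*σP, cP*σP*σP*σP, τP*σP*σP*σP, σP*cP*σP*σP, τP*cP*σP*σP, σP*τP*σP*σP,
  cP*τP*σP*σP, cP*σP*cP*σP, τP*σP*cP*σP, σP*cP*cP*σP, σP*τP*cP*σP, σP*σP*τP*σP,
  cP*σP*τP*σP, τP*σP*τP*σP, σP*cP*τP*σP, σP*cP*σP*cP, τP*cP*σP*cP, σP*τP*σP*cP,
  cP*τP*σP*cP, σP*σP*τP*cP, τP*σP*τP*cP, σP*σP*σP*τP, cP*σP*σP*τP, τP*σP*σP*τP,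
  σP*cP*σP*τP, cP*cP*σP*τP, τP*cP*σP*τP, σP*τP*σP*τP]

lemma els_nodup : els.Nodup := by decide

lemma els_len : els.length = 56 := by rfl

lemma card_P_ge : 56 ≤ Nat.card ↥P := by
  have hinj : Function.Injective (fun i : Fin 56 => els.get (Fin.cast els_len.symm i)) := by
    intro i j hij
    have := List.nodup_iff_injective_get.mp els_nodup hij
    exact Fin.cast_injective _ (by exact this)
  calc 56 = Nat.card (Fin 56) := by simp
    _ ≤ Nat.card ↥P := Nat.card_le_card_of_injective _ hinj

lemma P_ne_top : P ≠ ⊤ := by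
  intro h
  have htG : tG ∈ P := h ▸ Subgroup.mem_top tG
  have : fano tp := Subgroup.mem_subgroupOf.mp htG
  exact absurd this (by decide)

lemma card_mul_card_le {G : Type*} [Group G] [Finite G] {H K : Subgroup G} (h : H ⊓ K = ⊥) :
    Nat.card H * Nat.card K ≤ Nat.card G := by
  rw [← Nat.card_prod]
  refine Nat.card_le_card_of_injective (fun x : H × K => (x.1 : G) * (x.2 : G)) ?_
  intro x y hxy
  simp only at hxy
  have key : (y.1 : G)⁻¹ * x.1 = (y.2 : G) * (x.2 : G)⁻¹ := by
    have := congrArg (fun z => (y.1 : G)⁻¹ * z * (x.2 : G)⁻¹) hxy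
    simpa [mul_assoc] using this
  have mem : (y.1 : G)⁻¹ * x.1 ∈ H ⊓ K :=
    ⟨mul_mem (H.inv_mem y.1.2) x.1.2, key ▸ mul_mem y.2.2 (K.inv_mem x.2.2)⟩
  rw [h, Subgroup.mem_bot] at mem
  have e1 : (x.1 : G) = y.1 := by
    have := inv_mul_eq_one.mp mem
    exact this.symm
  have e2 : (x.2 : G) = y.2 := by
    have h2 : (y.2 : G) * (x.2 : G)⁻¹ = 1 := key ▸ mem
    have := mul_inv_eq_one.mp h2
    exact this.symm
  exact Prod.ext (Subtype.ext e1) (Subtype.ext e2)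

lemma nat_card_A7 : Nat.card (alternatingGroup (Fin 7)) = 2520 := by
  have h2 : 2 * Fintype.card (alternatingGroup (Fin 7)) = Fintype.card (Perm (Fin 7)) :=
    two_mul_card_alternatingGroup
  rw [Fintype.card_perm, Fintype.card_fin] at h2
  have h3 : Nat.factorial 7 = 5040 := by norm_num [Nat.factorial]
  rw [Nat.card_eq_fintype_card]
  omega

lemma exists_conj_gen (a : alternatingGroup (Fin 7)) (ha : orderOf a = 7) :
    ∃ g : alternatingGroup (Fin 7), a ∈ Subgroup.zpowers (g * σG * g⁻¹) := by
  have key : ∀ (v : Perm (Fin 7)) (hv : v ∈ alternatingGroup (Fin 7)) (k : ℕ),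
      v * σp * v⁻¹ = (a : Perm (Fin 7)) ^ k →
      (⟨v, hv⟩ : alternatingGroup (Fin 7)) * σG * (⟨v, hv⟩ : alternatingGroup (Fin 7))⁻¹
        = a ^ k := by
    intro v hv k h
    apply Subtype.ext
    rw [Subgroup.coe_mul, Subgroup.coe_mul, Subgroup.coe_inv, SubmonoidClass.coe_pow]
    exact h
  have hp : orderOf (a : Perm (Fin 7)) = 7 := by rw [Subgroup.orderOf_coe]; exact ha
  have hprime : (orderOf (a : Perm (Fin 7))).Prime := by rw [hp]; norm_num
  have hcyc : (a : Perm (Fin 7)).IsCycle := by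
    refine isCycle_of_prime_order hprime ?_
    have h1 := Finset.card_le_univ (a : Perm (Fin 7)).support
    simp only [Finset.card_univ, Fintype.card_fin] at h1
    omega
  have hσfin : σp = finRotate 7 := by decide
  have hσcyc : σp.IsCycle := by rw [hσfin]; exact isCycle_finRotate
  have hsupp : σp.support.card = (a : Perm (Fin 7)).support.card := by
    rw [hσfin, support_finRotate, Finset.card_univ, Fintype.card_fin, ← hcyc.orderOf, hp]
  obtain ⟨u, hu⟩ := isConj_iff.mp (hσcyc.isConj hcyc hsupp)
  rcases Int.units_eq_one_or (Perm.sign u) with hs | hs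
  · refine ⟨⟨u, Perm.mem_alternatingGroup.mpr hs⟩, ?_⟩
    rw [key u (Perm.mem_alternatingGroup.mpr hs) 1 (by rw [pow_one]; exact hu), pow_one]
    exact Subgroup.mem_zpowers a
  · have hwsign : Perm.sign wp = -1 := by decide
    have hs' : Perm.sign (u * wp) = 1 := by rw [map_mul, hs, hwsign]; decide
    have hw : wp * σp * wp⁻¹ = σp ^ 3 := by decide
    have h1 : (u * wp) * σp * (u * wp)⁻¹ = u * (wp * σp * wp⁻¹) * u⁻¹ := by
      group
    rw [hw] at h1
    have h2 : u * σp ^ 3 * u⁻¹ = (u * σp * u⁻¹) ^ 3 := by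
      rw [← MulAut.conj_apply, ← MulAut.conj_apply, ← map_pow]
    rw [h2, hu] at h1
    refine ⟨⟨u * wp, Perm.mem_alternatingGroup.mpr hs'⟩, ?_⟩
    rw [key (u * wp) (Perm.mem_alternatingGroup.mpr hs') 3 h1]
    have ha15 : (a ^ 3) ^ 5 = a := by
      rw [← pow_mul]
      have h15 := pow_mod_orderOf a 15
      rw [ha] at h15
      norm_num at h15
      norm_num
      exact h15.symm
    have hmem := pow_mem (Subgroup.mem_zpowers (a ^ 3)) 5
    rw [ha15] at hmem
    exact hmem

/-- Any cyclic subgroup of order 7 of `A₇` is contained in a large proper subgroup. -/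
lemma exists_envelope (A : Subgroup (alternatingGroup (Fin 7)))
    (hcyc : IsCyclic ↥A) (hc : Nat.card ↥A = 7) :
    ∃ X : Subgroup (alternatingGroup (Fin 7)),
      A ≤ X ∧ 56 ≤ Nat.card ↥X ∧ X ≠ ⊤ := by
  haveI := hcyc
  obtain ⟨gA, hgen⟩ := IsCyclic.exists_generator (α := ↥A)
  have hdvd : orderOf gA ∣ 7 := by
    have h := orderOf_dvd_natCard gA
    rwa [hc] at h
  have hne1 : orderOf gA ≠ 1 := by
    intro h1
    rw [orderOf_eq_one_iff] at h1
    have hall : ∀ x : ↥A, x = 1 := fun x => by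
      obtain ⟨n, hn⟩ := Subgroup.mem_zpowers_iff.mp (hgen x)
      rw [← hn, h1, one_zpow]
    haveI : Subsingleton ↥A := ⟨fun x y => by rw [hall x, hall y]⟩
    rw [Nat.card_of_subsingleton (1 : ↥A)] at hc
    omega
  have h7 : orderOf gA = 7 :=
    ((by norm_num : Nat.Prime 7).eq_one_or_self_of_dvd _ hdvd).resolve_left hne1
  have horda : orderOf (gA : alternatingGroup (Fin 7)) = 7 := by
    rw [Subgroup.orderOf_coe]; exact h7
  obtain ⟨g, hg⟩ := exists_conj_gen _ horda
  refine ⟨P.map (MulAut.conj g).toMonoidHom, ?_, ?_, ?_⟩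
  · have hmem : g * σG * g⁻¹ ∈ P.map (MulAut.conj g).toMonoidHom :=
      Subgroup.mem_map.mpr ⟨σG, hσP, by simp [MulAut.conj_apply]⟩
    have hzle := Subgroup.zpowers_le.mpr hmem
    have haX : (gA : alternatingGroup (Fin 7)) ∈ P.map (MulAut.conj g).toMonoidHom := hzle hg
    intro x hx
    obtain ⟨n, hn⟩ := Subgroup.mem_zpowers_iff.mp (hgen ⟨x, hx⟩)
    have hxeq : ((gA ^ n : ↥A) : alternatingGroup (Fin 7)) = x := by rw [hn]
    rw [← hxeq, SubgroupClass.coe_zpow]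
    exact Subgroup.zpow_mem _ haX n
  · have hcard := Nat.card_congr (P.equivMapOfInjective (MulAut.conj g).toMonoidHom
      (MulAut.conj g).injective).toEquiv
    have := card_P_ge
    omega
  · intro htop
    apply P_ne_top
    have hmm := congrArg (Subgroup.map (MulAut.conj g⁻¹).toMonoidHom) htop
    rw [Subgroup.map_map,
      Subgroup.map_top_of_surjective _ (MulAut.conj g⁻¹).surjective] at hmm
    have hcomp : (MulAut.conj g⁻¹).toMonoidHom.comp (MulAut.conj g).toMonoidHom
        = MonoidHom.id (alternatingGroup (Fin 7)) := by
      ext x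
      simp [MulAut.conj_apply, mul_assoc]
    rw [hcomp, Subgroup.map_id] at hmm
    exact hmm

end IGAux

theorem stmt8 (A B : IGVert (alternatingGroup (Fin 7)))
    (hA : IsCyclic A.1) (hB : IsCyclic B.1)
    (hcA : Nat.card A.1 = 7) (hcB : Nat.card B.1 = 7) :
    (intGraph (alternatingGroup (Fin 7))).dist A B ≤ 3 := by
  classical
  obtain ⟨X, hAX, hXcard, hXtop⟩ := IGAux.exists_envelope A.1 hA hcA
  obtain ⟨Y, hBY, hYcard, hYtop⟩ := IGAux.exists_envelope B.1 hB hcB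
  have hXbot : X ≠ ⊥ := fun h => A.2.1 (le_bot_iff.mp (h ▸ hAX))
  have hYbot : Y ≠ ⊥ := fun h => B.2.1 (le_bot_iff.mp (h ▸ hBY))
  set vX : IGVert (alternatingGroup (Fin 7)) := ⟨X, hXbot, hXtop⟩ with hvX
  set vY : IGVert (alternatingGroup (Fin 7)) := ⟨Y, hYbot, hYtop⟩ with hvY
  have hAneX : A ≠ vX := by
    intro h
    have : A.1 = X := congrArg Subtype.val h
    rw [← this] at hXcard
    omega
  have hBneY : B ≠ vY := by
    intro h
    have : B.1 = Y := congrArg Subtype.val h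
    rw [← this] at hYcard
    omega
  have hBneX : B ≠ vX := by
    intro h
    have : B.1 = X := congrArg Subtype.val h
    rw [← this] at hXcard
    omega
  have adjAX : (intGraph (alternatingGroup (Fin 7))).Adj A vX :=
    ⟨hAneX, by rw [inf_eq_left.mpr hAX]; exact A.2.1⟩
  have adjYB : (intGraph (alternatingGroup (Fin 7))).Adj vY B :=
    ⟨fun h => hBneY h.symm, by rw [inf_eq_right.mpr hBY]; exact B.2.1⟩
  by_cases hXY : X = Y
  · have adjXB : (intGraph (alternatingGroup (Fin 7))).Adj vX B :=
      ⟨fun h => hBneX h.symm, by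
        show X ⊓ B.1 ≠ ⊥
        rw [hXY, inf_eq_right.mpr hBY]
        exact B.2.1⟩
    refine le_trans (SimpleGraph.dist_le (SimpleGraph.Walk.cons adjAX
      (SimpleGraph.Walk.cons adjXB SimpleGraph.Walk.nil))) (by simp)
  · have hinf : X ⊓ Y ≠ ⊥ := by
      intro hbot
      have hle := IGAux.card_mul_card_le hbot
      rw [IGAux.nat_card_A7] at hle
      have : 56 * 56 ≤ Nat.card ↥X * Nat.card ↥Y := Nat.mul_le_mul hXcard hYcard
      omega
    have adjXY : (intGraph (alternatingGroup (Fin 7))).Adj vX vY :=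
      ⟨fun h => hXY (congrArg Subtype.val h), hinf⟩
    refine le_trans (SimpleGraph.dist_le (SimpleGraph.Walk.cons adjAX
      (SimpleGraph.Walk.cons adjXY (SimpleGraph.Walk.cons adjYB SimpleGraph.Walk.nil)))) (by simp)
end

section
/- Let n ≥ 5 be prime, g_a = (1, 2, …, n) ∈ A_n, and g_b = g_a conjugated by the transposition (1, 2). Suppose h ∈ A_n fixes the point 1, and there exist integers i, j with g_a^h = g_a^i and g_b^h = g_b^j. Then i = j = 1 and h centralizes both g_a and g_b. -/
/-!
Identify `Fin p` with the field `ZMod p`, so that `g_a` is the translation `x ↦ x + 1`.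
A permutation `h` with `h⁻¹ g_a h = g_a ^ i` satisfies `h (x + i) = h x + 1`, so, fixing `0`,
it is the linear map `x ↦ i⁻¹ x`; likewise `τ h τ` (with `τ = swap 0 1`) is an affine map
`x ↦ c + j⁻¹ x`. These two maps agree outside `{0, 1, i}`, which leaves at least two points
since `p ≥ 5`, so they are equal; evaluating at `1`, where `τ h τ 1 = 1`, gives `i⁻¹ = j⁻¹ = 1`.
-/

open Equiv

theorem Equiv.Perm.inv_mul_addRight_mul_eq_addRight_iff {G : Type*} [AddGroup G]
    (h : Perm G) (s t : G) :
    h⁻¹ * Equiv.addRight t * h = Equiv.addRight s ↔ ∀ x, h (x + s) = h x + t := by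
  simp only [Perm.ext_iff, Perm.mul_apply, Perm.inv_eq_iff_eq, Equiv.coe_addRight]
  exact forall_congr' fun _ => eq_comm

theorem inv_mul_mul_eq_pow_of_conj {G : Type*} [Group G] {g h τ : G} {j : ℕ}
    (hj : h⁻¹ * (τ⁻¹ * g * τ) * h = (τ⁻¹ * g * τ) ^ j) :
    (τ * h * τ⁻¹)⁻¹ * g * (τ * h * τ⁻¹) = g ^ j := by
  have hpow : (τ⁻¹ * g * τ) ^ j = τ⁻¹ * g ^ j * τ := by
    simpa using conj_pow (a := τ⁻¹) (b := g) (i := j)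
  calc (τ * h * τ⁻¹)⁻¹ * g * (τ * h * τ⁻¹)
      = τ * (h⁻¹ * (τ⁻¹ * g * τ) * h) * τ⁻¹ := by group
    _ = g ^ j := by rw [hj, hpow]; group

theorem eq_and_eq_of_add_mul_eq_add_mul {R : Type*} [CommRing R] [NoZeroDivisors R]
    {a b c d x y : R} (hxy : x ≠ y) (hx : a + b * x = c + d * x) (hy : a + b * y = c + d * y) :
    a = c ∧ b = d := by
  have hbd : b = d :=
    mul_right_cancel₀ (sub_ne_zero.2 hxy) (by linear_combination hx - hy)
  exact ⟨by simpa [hbd] using hx, hbd⟩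

theorem Finset.exists_ne_of_card_add_two_le {α : Type*} [Fintype α] [DecidableEq α]
    (s : Finset α) (hs : s.card + 2 ≤ Fintype.card α) : ∃ x ∉ s, ∃ y ∉ s, x ≠ y := by
  simpa using Finset.one_lt_card.1 (by rw [Finset.card_compl]; omega : 1 < sᶜ.card)

namespace ZMod

variable {p : ℕ} [Fact p.Prime]

theorem eq_add_inv_mul_of_map_add {f : ZMod p → ZMod p} {s : ZMod p} (hs : s ≠ 0)
    (hf : ∀ x, f (x + s) = f x + 1) (x : ZMod p) : f x = f 0 + s⁻¹ * x := by
  have hmul : ∀ k : ℕ, f (k * s) = f 0 + k := by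
    intro k
    induction k with
    | zero => simp
    | succ k ih => rw [Nat.cast_succ, add_one_mul, hf, ih, add_assoc]
  obtain ⟨k, hk⟩ := natCast_zmod_surjective (x * s⁻¹)
  calc f x = f (k * s) := by rw [hk, inv_mul_cancel_right₀ hs]
    _ = f 0 + s⁻¹ * x := by rw [hmul, hk, mul_comm]

theorem eq_one_of_map_add_of_swap_conj_map_add (hp : 5 ≤ p) {f : ZMod p → ZMod p}
    (hf0 : f 0 = 0) {s t : ZMod p} (hs : s ≠ 0) (ht : t ≠ 0) (hf : ∀ x, f (x + s) = f x + 1)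
    (hg : ∀ x, swap 0 1 (f (swap 0 1 (x + t))) = swap 0 1 (f (swap 0 1 x)) + 1) :
    s = 1 ∧ t = 1 := by
  set g : ZMod p → ZMod p := fun x => swap 0 1 (f (swap 0 1 x))
  have hf_lin : ∀ x, f x = 0 + s⁻¹ * x := by simpa [hf0] using eq_add_inv_mul_of_map_add hs hf
  have hg_aff : ∀ x, g x = g 0 + t⁻¹ * x := eq_add_inv_mul_of_map_add ht hg
  have hg1 : g 1 = 1 := by simp [g, hf0]
  -- `swap 0 1` fixes `x` and `f x = s⁻¹ * x` unless `x ∈ {0, 1, s}`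
  have hgf : ∀ x ∉ ({0, 1, s} : Finset (ZMod p)), g x = f x := by
    intro x hx
    simp only [Finset.mem_insert, Finset.mem_singleton, not_or] at hx
    obtain ⟨hx0, hx1, hxs⟩ := hx
    have hfx0 : f x ≠ 0 := by simp [hf_lin, hs, hx0]
    have hfx1 : f x ≠ 1 := by
      rw [hf_lin, zero_add, Ne, inv_mul_eq_one₀ hs]; exact Ne.symm hxs
    simp only [g, swap_apply_of_ne_of_ne hx0 hx1, swap_apply_of_ne_of_ne hfx0 hfx1]
  obtain ⟨x, hx, y, hy, hxy⟩ := Finset.exists_ne_of_card_add_two_le {0, 1, s}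
    (by rw [ZMod.card]; linarith [Finset.card_le_three (a := (0 : ZMod p)) (b := 1) (c := s)])
  obtain ⟨hg0, hts⟩ :=
    eq_and_eq_of_add_mul_eq_add_mul (a := g 0) (b := t⁻¹) (c := 0) (d := s⁻¹) hxy
    (by rw [← hg_aff, hgf x hx, hf_lin]) (by rw [← hg_aff, hgf y hy, hf_lin])
  have ht1 : t⁻¹ = 1 := by rw [← hg1, hg_aff 1, hg0, zero_add, mul_one]
  exact ⟨inv_eq_one.1 (hts.symm.trans ht1), inv_eq_one.1 ht1⟩

theorem natCast_eq_one_of_conj_eq_pow (hp : 5 ≤ p) {ga τ gb h : Perm (ZMod p)}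
    (hga : ga = Equiv.addRight 1) (hτ : τ = swap 0 1) (hgb : gb = τ⁻¹ * ga * τ) (hfix : h 0 = 0)
    {i j : ℕ} (hi : (i : ZMod p) ≠ 0) (hj : (j : ZMod p) ≠ 0)
    (hconji : h⁻¹ * ga * h = ga ^ i) (hconjj : h⁻¹ * gb * h = gb ^ j) :
    (i : ZMod p) = 1 ∧ (j : ZMod p) = 1 := by
  subst hga hτ hgb
  rw [nsmul_addRight, nsmul_one, Perm.inv_mul_addRight_mul_eq_addRight_iff] at hconji
  have hconj₂ := inv_mul_mul_eq_pow_of_conj hconjj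
  rw [swap_inv, nsmul_addRight, nsmul_one, Perm.inv_mul_addRight_mul_eq_addRight_iff] at hconj₂
  exact eq_one_of_map_add_of_swap_conj_map_add hp hfix hi hj hconji hconj₂

theorem natCast_eq_one_iff_of_lt {n k : ℕ} (hn : 1 < n) (hk : k < n) :
    (k : ZMod n) = 1 ↔ k = 1 := by
  rw [← Nat.cast_one, natCast_eq_natCast_iff', Nat.mod_eq_of_lt hk, Nat.mod_eq_of_lt hn]

end ZMod

theorem stmt11 (n : ℕ) (hn : 5 ≤ n) (hp : n.Prime)
    (ga : Equiv.Perm (Fin n)) (hga : ga = finRotate n)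
    (τ : Equiv.Perm (Fin n))
    (hτ : τ = Equiv.swap (⟨0, by omega⟩ : Fin n) (⟨1, by omega⟩ : Fin n))
    (gb : Equiv.Perm (Fin n)) (hgb : gb = τ⁻¹ * ga * τ)
    (h : Equiv.Perm (Fin n))
    (hfix : h ⟨0, by omega⟩ = ⟨0, by omega⟩)
    (i j : ℕ) (hi : 0 < i) (hi' : i < n) (hj : 0 < j) (hj' : j < n)
    (hconji : h⁻¹ * ga * h = ga ^ i) (hconjj : h⁻¹ * gb * h = gb ^ j) :
    i = 1 ∧ j = 1 ∧ Commute h ga ∧ Commute h gb := by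
  obtain ⟨p, rfl⟩ : ∃ p, n = p + 1 := ⟨n - 1, by omega⟩
  have : Fact (p + 1).Prime := ⟨hp⟩
  -- `Fin (p + 1)` is `ZMod (p + 1)` by definition
  have hga' : ga = (Equiv.addRight 1 : Perm (ZMod (p + 1))) :=
    hga.trans (Equiv.ext finRotate_apply)
  have hτ' : τ = swap (0 : ZMod (p + 1)) 1 := by
    have h1 : (⟨1, by omega⟩ : Fin (p + 1)) = (1 : ZMod (p + 1)) :=
      Fin.ext (Nat.mod_eq_of_lt (show 1 < p + 1 by omega)).symm
    rw [hτ, h1]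
    rfl
  have hne : ∀ {k : ℕ}, 0 < k → k < p + 1 → (k : ZMod (p + 1)) ≠ 0 := fun h0 hlt =>
    (ZMod.natCast_eq_zero_iff _ _).not.2 (Nat.not_dvd_of_pos_of_lt h0 hlt)
  obtain ⟨hi1, hj1⟩ := ZMod.natCast_eq_one_of_conj_eq_pow hn hga' hτ' hgb hfix (hne hi hi')
    (hne hj hj') hconji hconjj
  obtain rfl := (ZMod.natCast_eq_one_iff_of_lt (by omega) hi').1 hi1
  obtain rfl := (ZMod.natCast_eq_one_iff_of_lt (by omega) hj').1 hj1
  refine ⟨rfl, rfl, ?_, ?_⟩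
  · exact (inv_mul_eq_iff_eq_mul.1 (by rw [← mul_assoc, hconji, pow_one])).symm
  · exact (inv_mul_eq_iff_eq_mul.1 (by rw [← mul_assoc, hconjj, pow_one])).symm
end

section
/- Let G be a finite group, S ⊴ G with G/S of prime order p, and let A, B ≤ G be subgroups of prime order at distance 4 in the connected intersection graph Δ_G. Then neither A nor B is contained in S, and both A and B have order p. -/
lemma relIndex_eq_p' {G : Type*} [Group G] (S : Subgroup G) [S.Normal]
    {p : ℕ} (hp : p.Prime) (hidx : S.index = p) {K : Subgroup G} (hK : ¬ K ≤ S) :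
    S.relIndex K = p := by
  have h1 : S.relIndex K ∣ p := hidx ▸ Subgroup.relIndex_dvd_index_of_normal S K
  rcases hp.eq_one_or_self_of_dvd _ h1 with h | h
  · exact absurd (Subgroup.relIndex_eq_one.mp h) hK
  · exact h

lemma card_eq_p_of_disjoint {G : Type*} [Group G] (S : Subgroup G) [S.Normal]
    {p : ℕ} (hp : p.Prime) (hidx : S.index = p) {K : Subgroup G} (hK : ¬ K ≤ S)
    (hd : S ⊓ K = ⊥) : Nat.card K = p := by
  have h2 : S.relIndex K = Nat.card K := by
    rw [Subgroup.relIndex, Subgroup.subgroupOf_eq_bot.mpr (disjoint_iff.mpr hd),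
      Subgroup.index_bot]
  rw [← h2, relIndex_eq_p' S hp hidx hK]

lemma card_eq_p_of_prime {G : Type*} [Group G] (S : Subgroup G) [S.Normal]
    {p : ℕ} (hp : p.Prime) (hidx : S.index = p) {K : Subgroup G} (hK : ¬ K ≤ S)
    (hKp : (Nat.card K).Prime) : Nat.card K = p := by
  have h1 : S.relIndex K ∣ Nat.card K := Subgroup.index_dvd_card (S.subgroupOf K)
  rw [relIndex_eq_p' S hp hidx hK] at h1
  exact ((Nat.prime_dvd_prime_iff_eq hp hKp).mp h1).symm

lemma le_of_prime_card {G : Type*} [Group G] [Fintype G] {B K : Subgroup G}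
    (hB : (Nat.card B).Prime) (h : B ⊓ K ≠ ⊥) : B ≤ K := by
  have hdvd : Nat.card (B ⊓ K : Subgroup G) ∣ Nat.card B :=
    Subgroup.card_dvd_of_le inf_le_left
  rcases hB.eq_one_or_self_of_dvd _ hdvd with h1 | h1
  · exact absurd (Subgroup.card_eq_one.mp h1) h
  · have := Subgroup.eq_of_le_of_card_ge (inf_le_left : B ⊓ K ≤ B) (le_of_eq h1.symm)
    rw [← this]
    exact inf_le_right

lemma aux_not_le {G : Type*} [Group G] [Fintype G]
    (S : Subgroup G) [S.Normal] {p : ℕ} (hp : p.Prime) (hidx : S.index = p)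
    (hconn : (intGraph G).Connected)
    (A B : IGVert G) (hB : (Nat.card B.1).Prime)
    (hdist : (intGraph G).dist A B = 4) : ¬ A.1 ≤ S := by
  intro hAle
  have hSbot : S ≠ ⊥ := fun h => A.2.1 (le_bot_iff.mp (h ▸ hAle))
  have hStop : S ≠ ⊤ := fun h => hp.one_lt.ne' (by rw [← hidx, h, Subgroup.index_top])
  obtain ⟨W, hW⟩ := hconn.exists_walk_length_eq_dist A B
  rw [hdist] at hW
  have hadj : (intGraph G).Adj (W.getVert 3) B := by
    have h := W.adj_getVert_succ (i := 3) (by omega)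
    rwa [show (3 + 1) = W.length by omega, W.getVert_length] at h
  set K := W.getVert 3 with hKdef
  have hcon : ∀ (W' : (intGraph G).Walk A B), W'.length ≤ 3 → False := fun W' h => by
    have := SimpleGraph.dist_le W'
    omega
  by_cases hBS : B.1 ⊓ S = ⊥
  · have hBnleS : ¬ B.1 ≤ S := fun h => B.2.1 (by rw [← inf_eq_left.mpr h, hBS])
    have hcardB : Nat.card B.1 = p := card_eq_p_of_disjoint S hp hidx hBnleS (by rwa [inf_comm])
    have hBK : B.1 ≤ K.1 := le_of_prime_card hB (by rw [inf_comm]; exact hadj.2)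
    have hKnleS : ¬ K.1 ≤ S := fun h => hBnleS (hBK.trans h)
    have hKS : S ⊓ K.1 ≠ ⊥ := by
      intro h
      have hc : Nat.card K.1 = p := card_eq_p_of_disjoint S hp hidx hKnleS h
      have heq : B.1 = K.1 := Subgroup.eq_of_le_of_card_ge hBK (by rw [hc, hcardB])
      exact hadj.1 (Subtype.ext heq.symm)
    by_cases hAS : A.1 = S
    · have h1 : (intGraph G).Adj A K :=
        ⟨fun h => hKnleS (le_of_eq ((congrArg Subtype.val h).symm.trans hAS)),
         by rw [hAS]; exact hKS⟩
      exact hcon (SimpleGraph.Walk.cons h1 (SimpleGraph.Walk.cons hadj SimpleGraph.Walk.nil))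
        (by simp)
    · let vS : IGVert G := ⟨S, hSbot, hStop⟩
      have h1 : (intGraph G).Adj A vS :=
        ⟨fun h => hAS (congrArg Subtype.val h), by rw [inf_eq_left.mpr hAle]; exact A.2.1⟩
      have h2 : (intGraph G).Adj vS K :=
        ⟨fun h => hKnleS (le_of_eq (congrArg Subtype.val h).symm), hKS⟩
      exact hcon (SimpleGraph.Walk.cons h1 (SimpleGraph.Walk.cons h2
        (SimpleGraph.Walk.cons hadj SimpleGraph.Walk.nil))) (by simp)
  · by_cases hBSeq : B.1 = S
    · have hAB : A ≠ B := fun h => by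
        rw [h] at hdist; simp [SimpleGraph.dist_self] at hdist
      exact hcon (SimpleGraph.Walk.cons
        ⟨hAB, by rw [hBSeq, inf_eq_left.mpr hAle]; exact A.2.1⟩ SimpleGraph.Walk.nil) (Nat.le_of_ble_eq_true rfl)
    · by_cases hAS : A.1 = S
      · have hAB : A ≠ B := fun h => hBSeq (by rw [← congrArg Subtype.val h, hAS])
        exact hcon (SimpleGraph.Walk.cons ⟨hAB, by rw [hAS, inf_comm]; exact hBS⟩
          SimpleGraph.Walk.nil) (Nat.le_of_ble_eq_true rfl)
      · let vS : IGVert G := ⟨S, hSbot, hStop⟩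
        have h1 : (intGraph G).Adj A vS :=
          ⟨fun h => hAS (congrArg Subtype.val h), by rw [inf_eq_left.mpr hAle]; exact A.2.1⟩
        have h2 : (intGraph G).Adj vS B :=
          ⟨fun h => hBSeq ((congrArg Subtype.val h).symm), by rwa [inf_comm]⟩
        exact hcon (SimpleGraph.Walk.cons h1 (SimpleGraph.Walk.cons h2 SimpleGraph.Walk.nil))
          (by simp)

theorem stmt16 {G : Type*} [Group G] [Fintype G]
    (S : Subgroup G) [S.Normal] (p : ℕ) (hp : p.Prime) (hidx : S.index = p)
    (hconn : (intGraph G).Connected)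
    (A B : IGVert G)
    (hA : (Nat.card A.1).Prime) (hB : (Nat.card B.1).Prime)
    (hdist : (intGraph G).dist A B = 4) :
    ¬ A.1 ≤ S ∧ ¬ B.1 ≤ S ∧ Nat.card A.1 = p ∧ Nat.card B.1 = p := by
  have h1 : ¬ A.1 ≤ S := aux_not_le S hp hidx hconn A B hB hdist
  have h2 : ¬ B.1 ≤ S := aux_not_le S hp hidx hconn B A hA
    (by rw [SimpleGraph.dist_comm]; exact hdist)
  exact ⟨h1, h2, card_eq_p_of_prime S hp hidx h1 hA, card_eq_p_of_prime S hp hidx h2 hB⟩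
end

section
/- Let n ≥ 5 be prime and let g be an n-cycle in A_n. Then the normalizer in A_n of ⟨g⟩ has order n(n−1)/2. -/
open Equiv Equiv.Perm Subgroup

private lemma auxOrd {n : ℕ} (g : Equiv.Perm (Fin n)) (hcyc : g.IsCycle)
    (hsupp : g.support = Finset.univ) : orderOf g = n := by
  rw [hcyc.orderOf, hsupp, Finset.card_univ, Fintype.card_fin]

private lemma auxMove {n : ℕ} (g : Equiv.Perm (Fin n))
    (hsupp : g.support = Finset.univ) : ∀ b, g b ≠ b := fun b =>
  Equiv.Perm.mem_support.mp (by rw [hsupp]; exact Finset.mem_univ b)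

private lemma auxKeyZ {n : ℕ} (hp : n.Prime) (g : Equiv.Perm (Fin n)) (hcyc : g.IsCycle)
    (hsupp : g.support = Finset.univ) (a : Fin n) :
    ∀ d : ℤ, (g ^ d) a = a ↔ (d : ZMod n) = 0 := by
  haveI := Fact.mk hp
  haveI : NeZero n := ⟨hp.pos.ne'⟩
  intro d
  constructor
  · intro h
    by_contra hd
    have hinv : ((d : ZMod n)⁻¹ * d : ZMod n) = 1 := inv_mul_cancel₀ hd
    set v : ZMod n := (d : ZMod n)⁻¹ with hv
    have h1 : (((v.val : ℤ) * d : ℤ) : ZMod n) = 1 := by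
      push_cast
      rw [ZMod.natCast_val, ZMod.cast_id]
      exact hinv
    have hdvd : (n : ℤ) ∣ ((v.val : ℤ) * d - 1) :=
      (ZMod.intCast_zmod_eq_zero_iff_dvd ((v.val : ℤ) * d - 1) n).mp (by
        push_cast
        rw [ZMod.natCast_val, ZMod.cast_id, hinv]
        ring)
    have hg1 : g ^ ((v.val : ℤ) * d - 1) = 1 :=
      orderOf_dvd_iff_zpow_eq_one.mp (by rw [auxOrd g hcyc hsupp]; exact hdvd)
    have hg : g = (g ^ d) ^ (v.val : ℤ) := by
      rw [← zpow_mul, mul_comm]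
      have h2 : g ^ ((v.val : ℤ) * d) = g ^ ((v.val : ℤ) * d - 1) * g := by
        rw [← zpow_add_one g ((v.val : ℤ) * d - 1)]
        ring_nf
      rw [h2, hg1, one_mul]
    exact auxMove g hsupp a (by
      rw [hg]; exact Equiv.Perm.zpow_apply_eq_self_of_apply_eq_self h _)
  · intro h
    have hdvd : (n : ℤ) ∣ d := (ZMod.intCast_zmod_eq_zero_iff_dvd d n).mp h
    have h1 : g ^ d = 1 := orderOf_dvd_iff_zpow_eq_one.mp
      (by rw [auxOrd g hcyc hsupp]; exact hdvd)
    rw [h1]; rfl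

private lemma auxKey {n : ℕ} (hp : n.Prime) (g : Equiv.Perm (Fin n)) (hcyc : g.IsCycle)
    (hsupp : g.support = Finset.univ) (a : Fin n) (i j : ℕ) :
    (g ^ i) a = (g ^ j) a ↔ (i : ZMod n) = (j : ZMod n) := by
  have h := auxKeyZ hp g hcyc hsupp a ((i : ℤ) - j)
  have hsplit : g ^ ((i : ℤ) - j) = (g ^ j)⁻¹ * g ^ i := by
    rw [sub_eq_neg_add, zpow_add, zpow_neg, zpow_natCast, zpow_natCast]
  rw [hsplit] at h
  have hc : (((i : ℤ) - j : ℤ) : ZMod n) = 0 ↔ (i : ZMod n) = (j : ZMod n) := by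
    push_cast
    rw [sub_eq_zero]
  rw [hc] at h
  rw [← h]
  constructor
  · intro hij
    simp [Equiv.Perm.mul_apply, hij]
  · intro hfix
    have := congrArg (g ^ j) hfix
    simpa [Equiv.Perm.mul_apply] using this

private lemma auxTrans {n : ℕ} (g : Equiv.Perm (Fin n)) (hcyc : g.IsCycle)
    (hsupp : g.support = Finset.univ) (a b : Fin n) : ∃ i : ℕ, (g ^ i) a = b :=
  hcyc.exists_pow_eq (auxMove g hsupp a) (auxMove g hsupp b)


section
variable {n : ℕ} (hp : n.Prime) (g : Equiv.Perm (Fin n)) (hcyc : g.IsCycle)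
  (hsupp : g.support = Finset.univ)


include hp hcyc hsupp in
private lemma auxCent : Subgroup.centralizer {g} = Subgroup.zpowers g := by
  apply le_antisymm
  · intro x hx
    rw [Subgroup.mem_centralizer_singleton_iff] at hx
    set a : Fin n := ⟨0, hp.pos⟩
    obtain ⟨m, hm⟩ := auxTrans g hcyc hsupp a (x a)
    have hxm : x = g ^ m := by
      apply Equiv.ext
      intro b
      obtain ⟨i, hi⟩ := auxTrans g hcyc hsupp a b
      have hcom : x * g ^ i = g ^ i * x := (Commute.pow_right hx i).eq
      calc x b = (x * g ^ i) a := by rw [← hi]; rfl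
        _ = (g ^ i) (x a) := by rw [hcom]; rfl
        _ = (g ^ i) ((g ^ m) a) := by rw [hm]
        _ = (g ^ m) ((g ^ i) a) := by
            rw [← Equiv.Perm.mul_apply, ← Equiv.Perm.mul_apply, pow_mul_comm]
        _ = (g ^ m) b := by rw [hi]
    rw [hxm]
    exact Subgroup.mem_zpowers_iff.mpr ⟨m, by norm_cast⟩
  · intro x hx
    rw [Subgroup.mem_zpowers_iff] at hx
    obtain ⟨k, rfl⟩ := hx
    rw [Subgroup.mem_centralizer_singleton_iff]
    exact ((Commute.refl g).zpow_left k).eq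

include hp hcyc hsupp in
private lemma auxConjEx (m : ℕ) (hord : orderOf (g ^ m) = n) :
    ∃ c : Equiv.Perm (Fin n), c * g * c⁻¹ = g ^ m ∧
      c ∈ Subgroup.normalizer (Subgroup.zpowers g : Set (Equiv.Perm (Fin n))) := by
  have hle : Subgroup.zpowers (g ^ m) ≤ Subgroup.zpowers g :=
    Subgroup.zpowers_le.mpr (Subgroup.mem_zpowers_iff.mpr ⟨m, by norm_cast⟩)
  have hcards : Nat.card (Subgroup.zpowers (g ^ m)) = Nat.card (Subgroup.zpowers g) := by
    rw [Nat.card_zpowers, Nat.card_zpowers, hord, auxOrd g hcyc hsupp]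
  have heq : Subgroup.zpowers (g ^ m) = Subgroup.zpowers g :=
    Subgroup.eq_of_le_of_card_ge hle (le_of_eq hcards.symm)
  have hgmem : g ∈ Subgroup.zpowers (g ^ m) := heq ▸ Subgroup.mem_zpowers g
  obtain ⟨e, he⟩ := Subgroup.mem_zpowers_iff.mp hgmem
  -- he : (g ^ m) ^ e = g  (e : ℤ)
  have hmove : ∀ b, (g ^ m) b ≠ b := by
    intro b hb
    exact auxMove g hsupp b (by rw [← he]; exact Equiv.Perm.zpow_apply_eq_self_of_apply_eq_self hb e)
  have hsuppm : (g ^ m).support = Finset.univ :=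
    Finset.eq_univ_iff_forall.mpr fun b => Equiv.Perm.mem_support.mpr (hmove b)
  have hcycm : (g ^ m).IsCycle := by
    set a : Fin n := ⟨0, hp.pos⟩
    refine ⟨a, hmove a, ?_⟩
    intro y _
    obtain ⟨t, ht⟩ := auxTrans g hcyc hsupp a y
    refine ⟨e * t, ?_⟩
    rw [zpow_mul, he]
    rw [← ht]
    norm_cast
  have hconj : IsConj g (g ^ m) := hcyc.isConj hcycm (by rw [hsupp, hsuppm])
  obtain ⟨c, hc⟩ := isConj_iff.mp hconj
  refine ⟨c, hc, ?_⟩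
  have hgconj : g = c * g ^ e * c⁻¹ := by
    rw [← conj_zpow, hc, he]
  have hinvconj : c⁻¹ * g * c = g ^ e := by
    conv_lhs => rw [hgconj]
    group
  rw [Subgroup.mem_normalizer_iff]
  intro h
  constructor
  · intro hh
    obtain ⟨t, rfl⟩ := Subgroup.mem_zpowers_iff.mp hh
    rw [← conj_zpow, hc]
    exact Subgroup.mem_zpowers_iff.mpr ⟨(m : ℤ) * t, by rw [zpow_mul]; norm_cast⟩
  · intro hh
    obtain ⟨t, ht⟩ := Subgroup.mem_zpowers_iff.mp hh
    have : h = c⁻¹ * g ^ t * c := by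
      rw [ht]; group
    rw [this]
    have h2 : c⁻¹ * g ^ t * c = (c⁻¹ * g * c) ^ t := by
      have h3 := conj_zpow (i := t) (a := c⁻¹) (b := g)
      rw [inv_inv] at h3
      rw [h3]
    rw [h2, hinvconj, ← zpow_mul]
    exact Subgroup.mem_zpowers_iff.mpr ⟨e * t, rfl⟩
end



section
variable {n : ℕ} (hp : n.Prime) (g : Equiv.Perm (Fin n)) (hcyc : g.IsCycle)
  (hsupp : g.support = Finset.univ)

include hp hcyc hsupp in
private lemma auxCardN :
    Nat.card (Subgroup.normalizer (Subgroup.zpowers g : Set (Equiv.Perm (Fin n)))) = n * (n - 1) := by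
  haveI := Fact.mk hp
  set N := Subgroup.normalizer (Subgroup.zpowers g : Set (Equiv.Perm (Fin n))) with hN
  set H' := (Subgroup.zpowers g).subgroupOf N with hH'
  haveI : H'.Normal := Subgroup.normal_in_normalizer
  have cardH' : Nat.card H' = n := by
    rw [Nat.card_congr (Subgroup.subgroupOfEquivOfLe Subgroup.le_normalizer).toEquiv,
      Nat.card_zpowers, auxOrd g hcyc hsupp]
  haveI : IsCyclic H' := isCyclic_of_prime_card cardH'
  have cardAut : Nat.card (MulAut H') = n - 1 := by
    rw [IsCyclic.card_mulAut, cardH', Nat.totient_prime hp]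
  set f : N →* MulAut H' := MulAut.conjNormal with hf
  have hgN : g ∈ N := Subgroup.le_normalizer (Subgroup.mem_zpowers g)
  set gh : H' := ⟨⟨g, hgN⟩, by
    rw [hH', Subgroup.mem_subgroupOf]; exact Subgroup.mem_zpowers g⟩ with hgh
  have ordgh : orderOf gh = n := by
    rw [← Subgroup.orderOf_coe, ← Subgroup.orderOf_coe, auxOrd g hcyc hsupp]
  have gen : ∀ h : H', ∃ t : ℤ, gh ^ t = h := by
    have htop : Subgroup.zpowers gh = ⊤ := by
      apply Subgroup.eq_top_of_card_eq
      rw [Nat.card_zpowers, ordgh, cardH']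
    intro h
    exact Subgroup.mem_zpowers_iff.mp (htop ▸ Subgroup.mem_top h)
  -- surjectivity of f
  have hsurj : Function.Surjective f := by
    intro σ
    obtain ⟨j, hj⟩ := Subgroup.mem_zpowers_iff.mp
      (by rw [← Subgroup.mem_subgroupOf]; exact (σ gh).2 :
        (((σ gh : N) : Equiv.Perm (Fin n))) ∈ Subgroup.zpowers g)
    set m : ℕ := (j % (n : ℤ)).toNat with hm
    have hjm : g ^ m = g ^ j := by
      have h1 : ((m : ℤ)) = j % n := Int.toNat_of_nonneg (Int.emod_nonneg j (by exact_mod_cast hp.pos.ne'))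
      have h2 : g ^ ((j : ℤ) - m) = 1 := by
        apply orderOf_dvd_iff_zpow_eq_one.mp
        rw [auxOrd g hcyc hsupp]
        exact Int.dvd_self_sub_of_emod_eq h1.symm
      calc g ^ (m : ℕ) = g ^ ((m : ℤ)) := by norm_cast
        _ = g ^ ((m : ℤ) + (j - m)) := by rw [zpow_add, h2, mul_one]
        _ = g ^ j := by ring_nf
    have hval : g ^ m = ((σ gh : N) : Equiv.Perm (Fin n)) := by rw [hjm, hj]
    have hord : orderOf (g ^ m) = n := by
      have e1 : orderOf (σ gh) = orderOf gh :=
        orderOf_injective σ.toMonoidHom σ.injective gh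
      rw [hval, Subgroup.orderOf_coe, Subgroup.orderOf_coe, e1, ordgh]
    obtain ⟨c, hc, hcN⟩ := auxConjEx hp g hcyc hsupp m hord
    refine ⟨⟨c, hcN⟩, ?_⟩
    have hgen : f ⟨c, hcN⟩ gh = σ gh := by
      apply Subtype.ext; apply Subtype.ext
      show ((f ⟨c, hcN⟩ gh : N) : Equiv.Perm (Fin n)) = _
      rw [MulAut.conjNormal_apply]
      push_cast
      rw [← hval, ← hc]
    apply MulEquiv.ext
    intro h
    obtain ⟨t, rfl⟩ := gen h
    rw [map_zpow, map_zpow, hgen]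
  -- kernel of f
  have hker : f.ker = H' := by
    ext x
    rw [MonoidHom.mem_ker]
    constructor
    · intro hx
      have h1 : f x gh = gh := by rw [hx]; rfl
      have h2 : (x : Equiv.Perm (Fin n)) * g * (x : Equiv.Perm (Fin n))⁻¹ = g := by
        have := congrArg (fun y : H' => ((y : N) : Equiv.Perm (Fin n))) h1
        rw [MulAut.conjNormal_apply] at this
        push_cast at this
        exact this
      have hcomm : (x : Equiv.Perm (Fin n)) * g = g * (x : Equiv.Perm (Fin n)) := by
        have := congrArg (· * (x : Equiv.Perm (Fin n))) h2
        simpa [mul_assoc] using this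
      rw [hH', Subgroup.mem_subgroupOf]
      rw [← auxCent hp g hcyc hsupp]
      exact Subgroup.mem_centralizer_singleton_iff.mpr hcomm
    · intro hx
      rw [hH', Subgroup.mem_subgroupOf] at hx
      obtain ⟨s, hs⟩ := Subgroup.mem_zpowers_iff.mp hx
      apply MulEquiv.ext
      intro h
      obtain ⟨t, rfl⟩ := gen h
      rw [map_zpow]
      have hgh : f x gh = gh := by
        apply Subtype.ext; apply Subtype.ext
        show ((f x gh : N) : Equiv.Perm (Fin n)) = g
        rw [MulAut.conjNormal_apply]
        push_cast
        rw [← hs]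
        change g ^ s * g * (g ^ s)⁻¹ = g
        group
      rw [hgh]; rfl
  -- counting
  have h1 : Nat.card N = Nat.card (N ⧸ f.ker) * Nat.card f.ker :=
    Subgroup.card_eq_card_quotient_mul_card_subgroup f.ker
  have h2 : Nat.card (N ⧸ f.ker) = n - 1 := by
    rw [Nat.card_congr (QuotientGroup.quotientKerEquivOfSurjective f hsurj).toEquiv, cardAut]
  rw [h1, h2, hker, cardH', Nat.mul_comm]
end



section
variable {n : ℕ} (hn : 5 ≤ n) (hp : n.Prime) (g : Equiv.Perm (Fin n)) (hcyc : g.IsCycle)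
  (hsupp : g.support = Finset.univ)

include hn hp hcyc hsupp in
private lemma auxOdd :
    ∃ c ∈ Subgroup.normalizer (Subgroup.zpowers g : Set (Equiv.Perm (Fin n))), Equiv.Perm.sign c = -1 := by
  haveI := Fact.mk hp
  haveI : NeZero n := ⟨hp.pos.ne'⟩
  obtain ⟨u, hu⟩ := IsCyclic.exists_generator (α := (ZMod n)ˣ)
  have cardu : Fintype.card (ZMod n)ˣ = n - 1 := by
    rw [ZMod.card_units_eq_totient, Nat.totient_prime hp]
  have hu1 : u ≠ 1 := by
    intro h
    have h2 : Fintype.card (ZMod n)ˣ ≤ 1 := by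
      apply Fintype.card_le_one_iff.mpr
      intro x y
      obtain ⟨i, hi⟩ := Subgroup.mem_zpowers_iff.mp (hu x)
      obtain ⟨j, hj⟩ := Subgroup.mem_zpowers_iff.mp (hu y)
      rw [← hi, ← hj, h, one_zpow, one_zpow]
    omega
  set k : ℕ := (u : ZMod n).val with hkdef
  have hk : (k : ZMod n) = (u : ZMod n) := by
    rw [hkdef, ZMod.natCast_val, ZMod.cast_id]
  have hkne : ¬ (n ∣ k) := by
    intro hdvd
    have : (k : ZMod n) = 0 := (ZMod.natCast_eq_zero_iff k n).mpr hdvd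
    rw [hk] at this
    exact Units.ne_zero u this
  have hordk : orderOf (g ^ k) = n := by
    rw [orderOf_pow, auxOrd g hcyc hsupp,
      Nat.Coprime.gcd_eq_one ((Nat.Prime.coprime_iff_not_dvd hp).mpr hkne), Nat.div_one]
  obtain ⟨c, hc, hcN⟩ := auxConjEx hp g hcyc hsupp k hordk
  set a : Fin n := ⟨0, hp.pos⟩ with ha
  obtain ⟨m₀, hm₀⟩ := auxTrans g hcyc hsupp a (c a)
  set c' : Equiv.Perm (Fin n) := (g ^ m₀)⁻¹ * c with hc'def
  have hc'N : c' ∈ Subgroup.normalizer (Subgroup.zpowers g : Set (Equiv.Perm (Fin n))) := by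
    exact Subgroup.mul_mem _
      (Subgroup.inv_mem _ (Subgroup.le_normalizer (Subgroup.mem_zpowers_iff.mpr ⟨m₀, by norm_cast⟩)))
      hcN
  have hc'a : c' a = a := by
    rw [hc'def, Equiv.Perm.mul_apply, ← hm₀]
    simp
  have hcomm : ∀ s t : ℕ, g ^ s * g ^ t = g ^ t * g ^ s := fun s t => pow_mul_comm g s t
  have hc'g : c' * g * c'⁻¹ = g ^ k := by
    have e1 : c' * g * c'⁻¹ = (g ^ m₀)⁻¹ * (c * g * c⁻¹) * g ^ m₀ := by
      rw [hc'def]; group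
    rw [e1, hc]
    rw [mul_assoc, hcomm k m₀, ← mul_assoc, inv_mul_cancel, one_mul]
  have conjpow : ∀ i : ℕ, c' * g ^ i * c'⁻¹ = g ^ (k * i) := by
    intro i
    rw [← conj_pow, hc'g, ← pow_mul]
  have applypow : ∀ i : ℕ, c' ((g ^ i) a) = (g ^ (k * i)) a := by
    intro i
    have h2 : c' * g ^ i = g ^ (k * i) * c' := by
      have := conjpow i
      calc c' * g ^ i = (c' * g ^ i * c'⁻¹) * c' := by group
        _ = g ^ (k * i) * c' := by rw [this]
    calc c' ((g ^ i) a) = (c' * g ^ i) a := rfl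
      _ = (g ^ (k * i) * c') a := by rw [h2]
      _ = (g ^ (k * i)) (c' a) := rfl
      _ = (g ^ (k * i)) a := by rw [hc'a]
  have iterpow : ∀ (j i : ℕ), (c' ^ j) ((g ^ i) a) = (g ^ (k ^ j * i)) a := by
    intro j
    induction j with
    | zero => intro i; simp
    | succ j ih =>
      intro i
      rw [pow_succ']
      calc (c' * c' ^ j) ((g ^ i) a) = c' ((c' ^ j) ((g ^ i) a)) := rfl
        _ = c' ((g ^ (k ^ j * i)) a) := by rw [ih]
        _ = (g ^ (k * (k ^ j * i))) a := applypow _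
        _ = (g ^ (k ^ (j + 1) * i)) a := by ring_nf
  have fixiff : ∀ b, c' b = b ↔ b = a := by
    intro b
    obtain ⟨i, rfl⟩ := auxTrans g hcyc hsupp a b
    rw [applypow i]
    have hbase : ((g ^ i) a = a) ↔ ((i : ZMod n) = 0) := by
      have := auxKey hp g hcyc hsupp a i 0
      simpa using this
    rw [auxKey hp g hcyc hsupp a (k * i) i, hbase]
    push_cast
    rw [hk]
    constructor
    · intro h
      have h2 : ((u : ZMod n) - 1) * (i : ZMod n) = 0 := by
        rw [sub_mul, one_mul, h, sub_self]
      rcases mul_eq_zero.mp h2 with h3 | h3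
      · exact absurd (Units.val_eq_one.mp (sub_eq_zero.mp h3)) hu1
      · exact h3
    · intro h
      rw [h, mul_zero]
  have hga : g a ≠ a := auxMove g hsupp a
  have hcyc' : c'.IsCycle := by
    refine ⟨g a, fun h => hga ((fixiff (g a)).mp h), ?_⟩
    intro y hy
    obtain ⟨t, rfl⟩ := auxTrans g hcyc hsupp a y
    have hyne : ((t : ZMod n)) ≠ 0 := by
      intro h0
      apply hy
      rw [fixiff]
      have h4 := auxKey hp g hcyc hsupp a t 0
      simp only [pow_zero, Equiv.Perm.one_apply, Nat.cast_zero] at h4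
      exact h4.mpr h0
    have hunit : IsUnit ((t : ZMod n)) := isUnit_iff_ne_zero.mpr hyne
    obtain ⟨j, hj⟩ := (Submonoid.mem_powers_iff hunit.unit u).mp
      ((isOfFinOrder_of_finite u).mem_powers_iff_mem_zpowers.mpr (hu hunit.unit))
    refine ⟨(j : ℤ), ?_⟩
    rw [zpow_natCast]
    have e1 : (c' ^ j) ((g ^ 1) a) = (g ^ (k ^ j * 1)) a := iterpow j 1
    rw [pow_one] at e1
    rw [e1]
    apply (auxKey hp g hcyc hsupp a (k ^ j * 1) t).mpr
    push_cast
    rw [hk, mul_one, ← Units.val_pow_eq_pow_val, hj, IsUnit.unit_spec]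
  have hsupp' : c'.support = Finset.univ.erase a := by
    ext b
    simp only [Equiv.Perm.mem_support, Finset.mem_erase, Finset.mem_univ, and_true]
    rw [Ne, fixiff b]
  have hcard : c'.support.card = n - 1 := by
    rw [hsupp', Finset.card_erase_of_mem (Finset.mem_univ a), Finset.card_univ,
      Fintype.card_fin]
  refine ⟨c', hc'N, ?_⟩
  rw [hcyc'.sign, hcard]
  have hodd : Odd n := hp.odd_of_ne_two (by omega)
  have heven : Even (n - 1) := Nat.Odd.sub_odd hodd odd_one
  rw [heven.neg_one_pow]
end



theorem stmt17 (n : ℕ) (hn : 5 ≤ n) (hp : n.Prime)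
    (g : Equiv.Perm (Fin n)) (hmem : g ∈ alternatingGroup (Fin n))
    (hcyc : g.IsCycle) (hsupp : g.support = Finset.univ) :
    Nat.card (alternatingGroup (Fin n) ⊓ Subgroup.normalizer (Subgroup.zpowers g : Set (Equiv.Perm (Fin n))) :
      Subgroup (Equiv.Perm (Fin n))) = n * (n - 1) / 2 := by
  classical
  set N := Subgroup.normalizer (Subgroup.zpowers g : Set (Equiv.Perm (Fin n))) with hNdef
  set A := alternatingGroup (Fin n) with hAdef
  set ψ : N →* ℤˣ := Equiv.Perm.sign.comp N.subtype with hψdef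
  have hker : ψ.ker = (A ⊓ N).subgroupOf N := by
    ext x
    rw [MonoidHom.mem_ker, Subgroup.mem_subgroupOf, Subgroup.mem_inf]
    constructor
    · intro h
      exact ⟨Equiv.Perm.mem_alternatingGroup.mpr h, x.2⟩
    · intro h
      exact Equiv.Perm.mem_alternatingGroup.mp h.1
  have hsurj : Function.Surjective ψ := by
    intro v
    rcases Int.units_eq_one_or v with rfl | rfl
    · exact ⟨1, map_one ψ⟩
    · obtain ⟨c, hcN, hcs⟩ := auxOdd hn hp g hcyc hsupp
      exact ⟨⟨c, hcN⟩, hcs⟩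
  have h1 : Nat.card N = Nat.card (N ⧸ ψ.ker) * Nat.card ψ.ker :=
    Subgroup.card_eq_card_quotient_mul_card_subgroup _
  have h2 : Nat.card (N ⧸ ψ.ker) = 2 := by
    rw [Nat.card_congr (QuotientGroup.quotientKerEquivOfSurjective ψ hsurj).toEquiv,
      Nat.card_eq_fintype_card]
    decide
  have h3 : Nat.card ψ.ker = Nat.card (A ⊓ N : Subgroup (Equiv.Perm (Fin n))) := by
    rw [hker]
    exact Nat.card_congr (Subgroup.subgroupOfEquivOfLe inf_le_right).toEquiv
  have h4 := auxCardN hp g hcyc hsupp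
  rw [h1, h2, h3] at h4
  rw [← h4]
  omega
end
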